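/- arXiv:2412.17196 — 4 statements merged into one kernel-verified Lean document; each statement's English description precedes it below -/
import Mathlib

section
/- Let f be a polynomial with real coefficients of degree d ≥ 1 such that f(x) > 0 for all real x ≥ 0, and let s ∈ ℂ. Then the double series Σ_{n,m≥1} (n · m^{d+1} · f(n/m))^{−s}, where each term is the principal complex power of a positive real number, is summable (absolutely convergent) if and only if Re(s) > 2/(d+2). -/
/-!
Write `A(n, m) = n m^(d+1) f(n/m) = m^(d+2) g(n/m)` with `g x = x f(x)`, and `σ = Re s`.
Since `f` is positive on `[0, ∞)` and its leading coefficient is positive, `f x ≥ c (x + 1)^d`,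
so `A(n, m) ≥ c n m (n + m)^d ≥ c (n m)^((d+2)/2)` and the series is dominated by the product of
two `p`-series with `p = (d + 2) σ / 2`. Conversely, `g(x)^(-σ)` has a positive lower bound
on `[1, 2]`, so the `m ≤ n ≤ 2m` part of the `m`-th row contributes `≳ m^(1 - (d+2)σ)`, which
is not summable in `m` when `σ ≤ 2/(d+2)`.
-/

open Polynomial Filter Topology Set

theorem exists_pos_forall_le_of_tendsto_atTop {g : ℝ → ℝ} {l : ℝ}
    (hg : ContinuousOn g (Ici 0)) (hpos : ∀ x, 0 ≤ x → 0 < g x) (hl : 0 < l)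
    (hlim : Tendsto g atTop (𝓝 l)) : ∃ c, 0 < c ∧ ∀ x, 0 ≤ x → c ≤ g x := by
  obtain ⟨N, hN⟩ := eventually_atTop.1 (hlim.eventually_const_le (half_lt_self hl))
  obtain ⟨x₀, hx₀, hmin⟩ := isCompact_Icc.exists_isMinOn (nonempty_Icc.2 (le_max_right N 0))
    (hg.mono Icc_subset_Ici_self)
  refine ⟨min (l / 2) (g x₀), lt_min (half_pos hl) (hpos x₀ hx₀.1), fun x hx => ?_⟩
  rcases le_total x (max N 0) with hxN | hxN
  · exact (min_le_right _ _).trans (hmin ⟨hx, hxN⟩)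
  · exact (min_le_left _ _).trans (hN x ((le_max_left _ _).trans hxN))

theorem summable_nat_add_one_rpow_iff {p : ℝ} :
    Summable (fun n : ℕ => ((n : ℝ) + 1) ^ p) ↔ p < -1 := by
  rw [← Real.summable_nat_rpow, ← summable_nat_add_iff (f := fun n : ℕ => (n : ℝ) ^ p) 1]
  simp only [Nat.cast_add, Nat.cast_one]

namespace Polynomial

variable {f : ℝ[X]} {d : ℕ}

theorem exists_pos_mul_add_one_pow_le_eval (hd : f.natDegree = d)
    (hf : ∀ x, 0 ≤ x → 0 < f.eval x) :
    ∃ c, 0 < c ∧ ∀ x, 0 ≤ x → c * (x + 1) ^ d ≤ f.eval x := by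
  have hf0 : f ≠ 0 := fun h => by simpa [h] using hf 0 le_rfl
  have hq : ((X + C 1 : ℝ[X]) ^ d).Monic := (monic_X_add_C 1).pow d
  have hdeg : f.degree = ((X + C 1 : ℝ[X]) ^ d).degree := by
    rw [degree_eq_natDegree hf0, degree_pow, degree_X_add_C, hd, nsmul_one]
  have hlim := div_tendsto_atTop_leadingCoeff_div_of_degree_eq f _ hdeg
  simp only [hq.leadingCoeff, div_one, eval_pow, eval_add, eval_X, eval_C] at hlim
  have hratio : ∀ x, 0 ≤ x → 0 < f.eval x / (x + 1) ^ d := fun x hx =>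
    div_pos (hf x hx) (by positivity)
  have hlc : 0 < f.leadingCoeff :=
    (ge_of_tendsto hlim (eventually_atTop.2 ⟨0, fun x hx => (hratio x hx).le⟩)).lt_of_ne'
      (leadingCoeff_ne_zero.2 hf0)
  have hcont : ContinuousOn (fun x => f.eval x / (x + 1) ^ d) (Ici 0) :=
    f.continuous.continuousOn.div (by fun_prop) fun x hx => by
      have : (0 : ℝ) ≤ x := hx
      positivity
  obtain ⟨c, hc, hle⟩ := exists_pos_forall_le_of_tendsto_atTop hcont hratio hlc hlim
  exact ⟨c, hc, fun x hx => (le_div_iff₀ (by positivity)).1 (hle x hx)⟩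

section

variable {n m : ℝ}

theorem mul_pow_mul_eval_div_pos (hf : ∀ x, 0 ≤ x → 0 < f.eval x) (hn : 0 < n) (hm : 0 < m) :
    0 < n * m ^ (d + 1) * f.eval (n / m) := by
  have := hf (n / m) (by positivity)
  positivity

theorem mul_pow_mul_eval_div_eq (hm : m ≠ 0) :
    n * m ^ (d + 1) * f.eval (n / m) = m ^ (d + 2) * (n / m * f.eval (n / m)) := by
  field_simp
  ring

theorem mul_rpow_le_mul_pow_mul_eval_div {c : ℝ} (hc : 0 ≤ c)
    (hcf : ∀ x, 0 ≤ x → c * (x + 1) ^ d ≤ f.eval x) (hn : 0 < n) (hm : 0 < m) :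
    c * (n * m) ^ (((d : ℝ) + 2) / 2) ≤ n * m ^ (d + 1) * f.eval (n / m) := by
  have hsqrt : √(n * m) ≤ n + m := Real.sqrt_le_iff.2 ⟨by positivity, by nlinarith⟩
  have hrpow : (n * m) ^ (((d : ℝ) + 2) / 2) = n * m * √(n * m) ^ d := by
    rw [Real.sqrt_eq_rpow, ← Real.rpow_natCast, ← Real.rpow_mul (by positivity),
      ← Real.rpow_one_add' (by positivity) (by positivity)]
    ring_nf
  calc c * (n * m) ^ (((d : ℝ) + 2) / 2) ≤ c * (n * m) * (n + m) ^ d := by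
        rw [hrpow, ← mul_assoc]
        gcongr
    _ = n * m ^ (d + 1) * (c * (n / m + 1) ^ d) := by
        rw [div_add_one hm.ne', div_pow]
        field_simp
        ring
    _ ≤ n * m ^ (d + 1) * f.eval (n / m) := by
        gcongr
        exact hcf _ (by positivity)

theorem exists_pos_mul_rpow_le_rpow_neg_mul_pow_mul_eval_div
    (hf : ∀ x, 0 ≤ x → 0 < f.eval x) (σ : ℝ) :
    ∃ δ, 0 < δ ∧ ∀ n m : ℝ, 0 < m → m ≤ n → n ≤ 2 * m →
      δ * m ^ (-(((d : ℝ) + 2) * σ)) ≤ (n * m ^ (d + 1) * f.eval (n / m)) ^ (-σ) := by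
  have hpos : ∀ x ∈ Icc (1 : ℝ) 2, 0 < x * f.eval x := fun x hx =>
    mul_pos (by linarith [hx.1]) (hf x (by linarith [hx.1]))
  have hcont : ContinuousOn (fun x => (x * f.eval x) ^ (-σ)) (Icc 1 2) :=
    ContinuousOn.rpow_const (by fun_prop) fun x hx => Or.inl (hpos x hx).ne'
  obtain ⟨x₀, hx₀, hmin⟩ := isCompact_Icc.exists_isMinOn (nonempty_Icc.2 one_le_two) hcont
  refine ⟨(x₀ * f.eval x₀) ^ (-σ), Real.rpow_pos_of_pos (hpos x₀ hx₀) _,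
    fun n m hm hmn hnm => ?_⟩
  have hx : n / m ∈ Icc (1 : ℝ) 2 :=
    ⟨(one_le_div hm).2 hmn, (div_le_iff₀ hm).2 hnm⟩
  rw [mul_pow_mul_eval_div_eq hm.ne', Real.mul_rpow (by positivity) (hpos _ hx).le,
    ← Real.rpow_natCast, ← Real.rpow_mul hm.le, mul_comm]
  push_cast
  rw [mul_neg]
  exact mul_le_mul_of_nonneg_left (isMinOn_iff.1 hmin _ hx) (by positivity)

end

theorem summable_rpow_neg_mul_pow_mul_eval_div_of_lt (hd : f.natDegree = d)
    (hf : ∀ x, 0 ≤ x → 0 < f.eval x) {σ : ℝ} (hσ : 2 / ((d : ℝ) + 2) < σ) :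
    Summable (fun p : ℕ × ℕ => (((p.1 : ℝ) + 1) * ((p.2 : ℝ) + 1) ^ (d + 1) *
      f.eval (((p.1 : ℝ) + 1) / ((p.2 : ℝ) + 1))) ^ (-σ)) := by
  obtain ⟨c, hc, hcf⟩ := exists_pos_mul_add_one_pow_le_eval hd hf
  set t := ((d : ℝ) + 2) / 2 * σ with ht
  have hσ0 : 0 < σ := lt_trans (by positivity) hσ
  have ht1 : -t < -1 := by
    rw [div_lt_iff₀ (by positivity)] at hσ
    linarith
  have hp : Summable (fun k : ℕ => ((k : ℝ) + 1) ^ (-t)) := summable_nat_add_one_rpow_iff.2 ht1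
  refine ((hp.mul_of_nonneg hp (fun _ => by positivity) (fun _ => by positivity)).mul_left
    (c ^ (-σ))).of_nonneg_of_le (fun p => Real.rpow_nonneg
      (mul_pow_mul_eval_div_pos hf (by positivity) (by positivity)).le _) (fun p => ?_)
  have hn : (0 : ℝ) < (p.1 : ℝ) + 1 := by positivity
  have hm : (0 : ℝ) < (p.2 : ℝ) + 1 := by positivity
  calc _ ≤ (c * (((p.1 : ℝ) + 1) * ((p.2 : ℝ) + 1)) ^ (((d : ℝ) + 2) / 2)) ^ (-σ) :=
        Real.rpow_le_rpow_of_nonpos (by positivity)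
          (mul_rpow_le_mul_pow_mul_eval_div hc.le hcf hn hm) (by linarith)
    _ = c ^ (-σ) * (((p.1 : ℝ) + 1) ^ (-t) * ((p.2 : ℝ) + 1) ^ (-t)) := by
        rw [Real.mul_rpow hc.le (by positivity), ← Real.rpow_mul (by positivity),
          ← Real.mul_rpow hn.le hm.le, ht, mul_neg]

theorem not_summable_rpow_neg_mul_pow_mul_eval_div_of_le (hf : ∀ x, 0 ≤ x → 0 < f.eval x)
    {σ : ℝ} (hσ : σ ≤ 2 / ((d : ℝ) + 2)) :
    ¬ Summable (fun p : ℕ × ℕ => (((p.1 : ℝ) + 1) * ((p.2 : ℝ) + 1) ^ (d + 1) *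
      f.eval (((p.1 : ℝ) + 1) / ((p.2 : ℝ) + 1))) ^ (-σ)) := by
  intro hsum
  obtain ⟨δ, hδ, hδle⟩ := exists_pos_mul_rpow_le_rpow_neg_mul_pow_mul_eval_div (d := d) hf σ
  have hexp : -2 ≤ -(((d : ℝ) + 2) * σ) := by
    rw [le_div_iff₀ (by positivity)] at hσ
    linarith
  have hrow : ∀ k : ℕ, δ * ((k : ℝ) + 1) ^ (-1 : ℝ) ≤ ∑' j : ℕ, (((j : ℝ) + 1) *
      ((k : ℝ) + 1) ^ (d + 1) * f.eval (((j : ℝ) + 1) / ((k : ℝ) + 1))) ^ (-σ) := by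
    intro k
    have hm1 : (1 : ℝ) ≤ (k : ℝ) + 1 := by linarith [(Nat.cast_nonneg k : (0 : ℝ) ≤ k)]
    have hterm : ∀ j ∈ Finset.Icc k (2 * k), δ * ((k : ℝ) + 1) ^ (-2 : ℝ) ≤
        (((j : ℝ) + 1) * ((k : ℝ) + 1) ^ (d + 1) *
          f.eval (((j : ℝ) + 1) / ((k : ℝ) + 1))) ^ (-σ) := by
      intro j hj
      obtain ⟨hkj, hjk⟩ := Finset.mem_Icc.1 hj
      refine le_trans ?_ (hδle _ _ (by positivity) (by exact_mod_cast Nat.succ_le_succ hkj) ?_)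
      · gcongr
      · have : (j : ℝ) ≤ 2 * k := by exact_mod_cast hjk
        linarith
    calc δ * ((k : ℝ) + 1) ^ (-1 : ℝ)
        = (Finset.Icc k (2 * k)).card • (δ * ((k : ℝ) + 1) ^ (-2 : ℝ)) := by
          rw [Nat.card_Icc, show 2 * k + 1 - k = k + 1 by omega, nsmul_eq_mul,
            Real.rpow_neg_one, Real.rpow_neg (by positivity), Real.rpow_two]
          push_cast
          field_simp
      _ ≤ _ := Finset.card_nsmul_le_sum _ _ _ hterm
      _ ≤ _ := hsum.prod_symm.prod_factor k |>.sum_le_tsum _ fun j _ =>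
          Real.rpow_nonneg (mul_pow_mul_eval_div_pos hf (by positivity) (by positivity)).le _
  have hharmonic : Summable (fun k : ℕ => δ * ((k : ℝ) + 1) ^ (-1 : ℝ)) :=
    hsum.prod_symm.prod.of_nonneg_of_le (fun k => by positivity) hrow
  have := summable_nat_add_one_rpow_iff.1 ((summable_mul_left_iff hδ.ne').1 hharmonic)
  norm_num at this

theorem summable_rpow_neg_mul_pow_mul_eval_div_iff (hd : f.natDegree = d)
    (hf : ∀ x, 0 ≤ x → 0 < f.eval x) (σ : ℝ) :
    Summable (fun p : ℕ × ℕ => (((p.1 : ℝ) + 1) * ((p.2 : ℝ) + 1) ^ (d + 1) *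
      f.eval (((p.1 : ℝ) + 1) / ((p.2 : ℝ) + 1))) ^ (-σ)) ↔ 2 / ((d : ℝ) + 2) < σ :=
  ⟨fun h => not_le.1 fun hσ => not_summable_rpow_neg_mul_pow_mul_eval_div_of_le hf hσ h,
    summable_rpow_neg_mul_pow_mul_eval_div_of_lt hd hf⟩

end Polynomial

theorem stmt0_general (f : Polynomial ℝ) (d : ℕ) (hd : f.natDegree = d)
    (hf : ∀ x : ℝ, 0 ≤ x → 0 < f.eval x) (s : ℂ) :
    Summable (fun p : ℕ × ℕ =>
      ((((p.1 : ℝ) + 1) * ((p.2 : ℝ) + 1) ^ (d + 1) *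
        f.eval (((p.1 : ℝ) + 1) / ((p.2 : ℝ) + 1)) : ℝ) : ℂ) ^ (-s)) ↔
      (2 : ℝ) / (d + 2) < s.re := by
  rw [← summable_norm_iff, summable_congr fun p => Complex.norm_cpow_eq_rpow_re_of_pos
    (mul_pow_mul_eval_div_pos hf (by positivity) (by positivity)) (-s), Complex.neg_re,
    summable_rpow_neg_mul_pow_mul_eval_div_iff hd hf]

/-- The double series `Σ_{n,m ≥ 1} (n · m^(d+1) · f(n/m))^(-s)` is summable
if and only if `Re(s) > 2/(d+2)`. -/
theorem stmt0 (f : Polynomial ℝ) (d : ℕ) (hd : f.natDegree = d) (hd1 : 1 ≤ d)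
    (hf : ∀ x : ℝ, 0 ≤ x → 0 < f.eval x) (s : ℂ) :
    Summable (fun p : ℕ × ℕ =>
      ((((p.1 : ℝ) + 1) * ((p.2 : ℝ) + 1) ^ (d + 1) *
        f.eval (((p.1 : ℝ) + 1) / ((p.2 : ℝ) + 1)) : ℝ) : ℂ) ^ (-s)) ↔
      (2 : ℝ) / (d + 2) < s.re :=
  stmt0_general f d hd hf s
end

section
/- Let f be a polynomial with real coefficients of degree d ≥ 1 such that f(x) > 0 for all real x ≥ 0, and assume in addition that all complex roots of f are real (hence negative). Then for every a ∈ ℂ, every ε with 0 < ε < π, and all real numbers σ₁, σ₂ with 0 < σ₁ ≤ σ₂ < d·Re(a), there exists a constant C > 0 such that for all σ ∈ [σ₁, σ₂] and all real t with |t| ≥ 1, ‖∫_0^∞ f(x)^{−a} x^{σ + it − 1} dx‖ ≤ C · exp(−(π − ε)·|t|). -/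
/-!
Write `f = c ∏ (x - r)` with `c > 0` and all roots `r < 0`. The substitution `x = eᵘ` turns the
integral into `∫ Ψ(u) du` over `ℝ`, where `Ψ(w) = c^{-a} ∏ (e^w - r)^{-a} e^{sw}` is holomorphic on
the strip `|Im w| < π`, since `e^w - r` stays off `(-∞, 0]` there. On a line `Im w = y` with
`|y| ≤ π - ε` every factor satisfies `|e^w - r| ≥ sin(ε/2) (eᵘ + |r|)`, so
`|Ψ(u + iy)| ≤ K e^{-ty} e^{σu} min(1, e^{-d Re(a) u})`, integrable uniformly in `σ ∈ [σ₁, σ₂]`.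
Shifting the contour to `Im w = ±(π - ε)`, the sign being that of `t`, produces `e^{-(π-ε)|t|}`.
-/

open Complex Polynomial MeasureTheory Set Filter Topology
open scoped Real

namespace Complex

lemma sin_half_mul_le_norm_sub_ofReal {z : ℂ} {ε r : ℝ} (hε : 0 ≤ ε)
    (hz : |arg z| ≤ π - ε) (hr : r ≤ 0) :
    Real.sin (ε / 2) * (‖z‖ - r) ≤ ‖z - r‖ := by
  have hεπ : ε ≤ π := by linarith [abs_nonneg (arg z)]
  have hsin : 0 ≤ Real.sin (ε / 2) := Real.sin_nonneg_of_nonneg_of_le_pi (by linarith) (by linarith)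
  have hsin1 : Real.sin (ε / 2) ≤ 1 := Real.sin_le_one _
  have hcos_eps : Real.cos ε = 1 - 2 * Real.sin (ε / 2) ^ 2 := by
    have h2 := Real.cos_two_mul (ε / 2)
    rw [mul_div_cancel₀ _ two_ne_zero] at h2
    linarith [Real.cos_sq_add_sin_sq (ε / 2)]
  have hcos : -Real.cos ε ≤ Real.cos (arg z) := by
    rw [← Real.cos_pi_sub, ← Real.cos_abs (arg z)]
    exact Real.cos_le_cos_of_nonneg_of_le_pi (abs_nonneg _) (by linarith) hz
  have hre : ‖z‖ * Real.cos (arg z) = z.re := norm_mul_cos_arg z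
  have hsq : ‖z - r‖ ^ 2 = ‖z‖ ^ 2 - 2 * r * z.re + r ^ 2 := by
    simp only [Complex.sq_norm, normSq_apply, sub_re, sub_im, ofReal_re, ofReal_im]
    ring
  refine le_of_pow_le_pow_left₀ two_ne_zero (norm_nonneg _) ?_
  rw [hsq, ← hre]
  have hρN : 0 ≤ ‖z‖ * -r := mul_nonneg (norm_nonneg z) (neg_nonneg.2 hr)
  -- `‖z - r‖² ≥ (‖z‖ + r)² + 4 sin²(ε/2) ‖z‖ (-r)`, while the left side squared is
  -- `sin²(ε/2) ((‖z‖ + r)² + 4 ‖z‖ (-r))`.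
  nlinarith [mul_nonneg hρN (neg_le_iff_add_nonneg.1 hcos),
    mul_nonneg (sub_nonneg.2 (pow_le_one₀ (n := 2) hsin hsin1)) (sq_nonneg (‖z‖ + r))]

lemma norm_cpow_le_mul_exp (z w : ℂ) : ‖z ^ w‖ ≤ ‖z‖ ^ w.re * Real.exp (π * |w.im|) := by
  refine (norm_cpow_le z w).trans ?_
  rw [div_eq_mul_inv, ← Real.exp_neg]
  gcongr
  calc -(arg z * w.im) ≤ |arg z| * |w.im| := by rw [← abs_mul]; exact neg_le_abs _
    _ ≤ π * |w.im| := by gcongr; exact abs_arg_le_pi z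

lemma exists_norm_cpow_sub_ofReal_le {ε r : ℝ} (hε : 0 < ε) (hεπ : ε ≤ π) (hr : r < 0)
    {b : ℂ} (hb : b.re ≤ 0) :
    ∃ K > 0, ∀ z : ℂ, |arg z| ≤ π - ε → ‖(z - r) ^ b‖ ≤ K * max 1 ‖z‖ ^ b.re := by
  have hδ : 0 < Real.sin (ε / 2) := Real.sin_pos_of_pos_of_lt_pi (by linarith) (by linarith)
  set κ := Real.sin (ε / 2) * min 1 (-r)
  have hκ : 0 < κ := mul_pos hδ (lt_min one_pos (by linarith))
  refine ⟨κ ^ b.re * Real.exp (π * |b.im|), by positivity, fun z hz => ?_⟩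
  have hmax : min 1 (-r) * max 1 ‖z‖ ≤ ‖z‖ - r := by
    rcases le_total 1 ‖z‖ with h | h
    · rw [max_eq_right h]
      nlinarith [min_le_left 1 (-r), norm_nonneg z]
    · rw [max_eq_left h, mul_one]
      linarith [min_le_right 1 (-r), norm_nonneg z]
  have hlow : κ * max 1 ‖z‖ ≤ ‖z - r‖ :=
    calc κ * max 1 ‖z‖ ≤ Real.sin (ε / 2) * (‖z‖ - r) := by
          rw [mul_assoc]; exact mul_le_mul_of_nonneg_left hmax hδ.le
      _ ≤ ‖z - r‖ := sin_half_mul_le_norm_sub_ofReal hε.le hz hr.le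
  calc ‖(z - r) ^ b‖ ≤ ‖z - r‖ ^ b.re * Real.exp (π * |b.im|) := norm_cpow_le_mul_exp _ _
    _ ≤ (κ * max 1 ‖z‖) ^ b.re * Real.exp (π * |b.im|) :=
        mul_le_mul_of_nonneg_right
          (Real.rpow_le_rpow_of_nonpos (by positivity) hlow hb) (Real.exp_pos _).le
    _ = κ ^ b.re * Real.exp (π * |b.im|) * max 1 ‖z‖ ^ b.re := by
        rw [Real.mul_rpow hκ.le (by positivity)]; ring

lemma exp_sub_ofReal_mem_slitPlane {w : ℂ} (hw : |w.im| < π) {r : ℝ} (hr : r ≤ 0) :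
    exp w - r ∈ slitPlane := by
  have hexp : exp w ∈ slitPlane := by
    rw [exp_mem_slitPlane, (toIocMod_eq_self _).2 ⟨(abs_lt.1 hw).1, by linarith [abs_lt.1 hw]⟩]
    exact (abs_lt.1 hw).2.ne
  rcases mem_slitPlane_iff.1 hexp with h | h
  · exact mem_slitPlane_iff.2 (Or.inl (by rw [sub_re, ofReal_re]; linarith))
  · exact mem_slitPlane_iff.2 (Or.inr (by rwa [sub_im, ofReal_im, sub_zero]))

theorem integral_add_mul_I_eq_integral {Ψ : ℂ → ℂ} {θ : ℝ} {B : ℝ → ℝ}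
    (hΨ : ∀ w : ℂ, w.im ∈ uIcc 0 θ → DifferentiableAt ℂ Ψ w)
    (hB : ∀ u : ℝ, ∀ y ∈ uIcc 0 θ, ‖Ψ (u + y * I)‖ ≤ B u)
    (hB_lim : Tendsto B (cocompact ℝ) (𝓝 0))
    (h0 : Integrable fun u : ℝ => Ψ u) (hθ : Integrable fun u : ℝ => Ψ (u + θ * I)) :
    ∫ u : ℝ, Ψ (u + θ * I) = ∫ u : ℝ, Ψ u := by
  set V : ℝ → ℂ := fun R =>
    I • (∫ y in (0 : ℝ)..θ, Ψ (R + y * I)) - I • ∫ y in (0 : ℝ)..θ, Ψ (-R + y * I)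
  have hrect : ∀ R : ℝ,
      ∫ x in -R..R, Ψ (x + θ * I) = (∫ x in -R..R, Ψ x) + V R := by
    intro R
    have h := integral_boundary_rect_eq_zero_of_differentiableOn Ψ (-R : ℝ) (R + θ * I)
      fun w hw => (hΨ w (by simpa using hw.2)).differentiableWithinAt
    simp only [ofReal_re, add_re, mul_re, I_re, I_im, ofReal_im, ofReal_neg, neg_re,
      neg_im, add_im, mul_im, mul_zero, mul_one, sub_zero, zero_add, add_zero, neg_zero,
      ofReal_zero, zero_mul] at h
    simp only [V]
    linear_combination -h
  have hV : Tendsto V atTop (𝓝 0) := by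
    have hside : ∀ R : ℝ, ‖∫ y in (0 : ℝ)..θ, Ψ (R + y * I)‖ ≤ B R * |θ| := fun R => by
      simpa using intervalIntegral.norm_integral_le_of_norm_le_const
        fun y hy => hB R y (uIoc_subset_uIcc hy)
    have hB_neg : Tendsto (fun R => B (-R)) atTop (𝓝 0) :=
      (hB_lim.mono_left atBot_le_cocompact).comp tendsto_neg_atTop_atBot
    refine squeeze_zero_norm (a := fun R => B R * |θ| + B (-R) * |θ|) (fun R => ?_) (by
      simpa using ((hB_lim.mono_left atTop_le_cocompact).mul_const |θ|).add (hB_neg.mul_const |θ|))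
    refine (norm_sub_le _ _).trans (add_le_add ?_ ?_)
    · simpa only [norm_smul, norm_I, one_mul] using hside R
    · simpa only [norm_smul, norm_I, one_mul, ofReal_neg] using hside (-R)
  have hlim := (intervalIntegral_tendsto_integral h0 tendsto_neg_atTop_atBot tendsto_id).add hV
  rw [add_zero] at hlim
  exact tendsto_nhds_unique
    (intervalIntegral_tendsto_integral hθ tendsto_neg_atTop_atBot tendsto_id)
    (hlim.congr fun R => (hrect R).symm)

theorem norm_integral_le_of_differentiableAt_strip {Ψ : ℂ → ℂ} {c t : ℝ} {φ : ℝ → ℝ}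
    (hc : 0 ≤ c) (hφ : Integrable φ) (hφ_lim : Tendsto φ (cocompact ℝ) (𝓝 0))
    (hΨ_diff : ∀ w : ℂ, |w.im| ≤ c → DifferentiableAt ℂ Ψ w)
    (hΨ_le : ∀ u y : ℝ, |y| ≤ c → ‖Ψ (u + y * I)‖ ≤ Real.exp (-(t * y)) * φ u) :
    ‖∫ u : ℝ, Ψ u‖ ≤ (∫ u, φ u) * Real.exp (-c * |t|) := by
  obtain ⟨θ, hθ, htθ⟩ : ∃ θ : ℝ, |θ| = c ∧ t * θ = c * |t| := by
    rcases le_total 0 t with ht | ht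
    · exact ⟨c, abs_of_nonneg hc, by rw [abs_of_nonneg ht, mul_comm]⟩
    · exact ⟨-c, by rw [abs_neg, abs_of_nonneg hc], by rw [abs_of_nonpos ht]; ring⟩
  have hstrip : ∀ y ∈ uIcc 0 θ, |y| ≤ c := fun y hy => by
    simpa [hθ] using abs_sub_left_of_mem_uIcc hy
  have hφ_nonneg : ∀ u, 0 ≤ φ u := fun u => by
    simpa using (norm_nonneg _).trans (hΨ_le u 0 (by simpa using hc))
  have hline : ∀ y ∈ uIcc 0 θ, Integrable fun u : ℝ => Ψ (u + y * I) := fun y hy =>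
    (hφ.const_mul _).mono'
      (Continuous.aestronglyMeasurable (continuous_iff_continuousAt.2 fun u =>
        (hΨ_diff _ (by simpa using hstrip y hy)).continuousAt.comp (by fun_prop)))
      (Eventually.of_forall fun u => hΨ_le u y (hstrip y hy))
  have hshift : ∫ u : ℝ, Ψ (u + θ * I) = ∫ u : ℝ, Ψ u := by
    refine integral_add_mul_I_eq_integral (B := fun u => Real.exp (c * |t|) * φ u)
      (fun w hw => hΨ_diff w (hstrip _ hw)) (fun u y hy => (hΨ_le u y (hstrip y hy)).trans ?_)
      (by simpa using hφ_lim.const_mul _) (by simpa using hline 0 left_mem_uIcc)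
      (hline θ right_mem_uIcc)
    refine mul_le_mul_of_nonneg_right (Real.exp_le_exp.2 ?_) (hφ_nonneg u)
    calc -(t * y) ≤ |t| * |y| := by rw [← abs_mul]; exact neg_le_abs _
      _ ≤ c * |t| := by rw [mul_comm]; gcongr; exact hstrip y hy
  calc ‖∫ u : ℝ, Ψ u‖ = ‖∫ u : ℝ, Ψ (u + θ * I)‖ := by rw [hshift]
    _ ≤ ∫ u : ℝ, Real.exp (-c * |t|) * φ u := by
        refine norm_integral_le_of_norm_le (hφ.const_mul _) (Eventually.of_forall fun u => ?_)
        rw [neg_mul, ← htθ]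
        exact hΨ_le u θ (hstrip θ right_mem_uIcc)
    _ = (∫ u, φ u) * Real.exp (-c * |t|) := by rw [integral_const_mul, mul_comm]

end Complex

/-- The product of the principal powers rather than the principal power of the product: for
roots `r ≤ 0` it is holomorphic in `exp` of the whole strip `|Im w| < π`. -/
noncomputable def prodSubCpow (R : Multiset ℝ) (b z : ℂ) : ℂ :=
  (R.map fun r : ℝ => (z - r) ^ b).prod

lemma exists_norm_prodSubCpow_le {R : Multiset ℝ} (hR : ∀ r ∈ R, r < 0) {ε : ℝ} (hε : 0 < ε)
    (hεπ : ε ≤ π) {b : ℂ} (hb : b.re ≤ 0) :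
    ∃ K > 0, ∀ z : ℂ, |arg z| ≤ π - ε →
      ‖prodSubCpow R b z‖ ≤ K * max 1 ‖z‖ ^ (Multiset.card R * b.re) := by
  induction R using Multiset.induction_on with
  | empty => exact ⟨1, one_pos, fun z _ => by simp [prodSubCpow]⟩
  | cons r R ih =>
    obtain ⟨K, hK, hKz⟩ := ih fun x hx => hR x (Multiset.mem_cons_of_mem hx)
    obtain ⟨L, hL, hLz⟩ :=
      Complex.exists_norm_cpow_sub_ofReal_le hε hεπ (hR r (Multiset.mem_cons_self r R)) hb
    refine ⟨L * K, mul_pos hL hK, fun z hz => ?_⟩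
    have hLz' := hLz z hz
    calc ‖prodSubCpow (r ::ₘ R) b z‖ = ‖(z - r) ^ b‖ * ‖prodSubCpow R b z‖ := by
          simp [prodSubCpow]
      _ ≤ L * max 1 ‖z‖ ^ b.re * (K * max 1 ‖z‖ ^ (Multiset.card R * b.re)) :=
          mul_le_mul hLz' (hKz z hz) (norm_nonneg _) ((norm_nonneg _).trans hLz')
      _ = L * K * max 1 ‖z‖ ^ (Multiset.card (r ::ₘ R) * b.re) := by
          rw [Multiset.card_cons, Nat.cast_succ, add_one_mul, add_comm,
            Real.rpow_add (by positivity)]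
          ring

lemma prod_map_sub_nonneg {R : Multiset ℝ} {x : ℝ} (hx : ∀ r ∈ R, r ≤ x) :
    0 ≤ (R.map (x - ·)).prod :=
  Multiset.prod_nonneg fun y hy => by
    obtain ⟨r, hr, rfl⟩ := Multiset.mem_map.1 hy
    exact sub_nonneg.2 (hx r hr)

lemma ofReal_prod_sub_cpow {R : Multiset ℝ} {x : ℝ} (hx : ∀ r ∈ R, r ≤ x) (b : ℂ) :
    (((R.map (x - ·)).prod : ℝ) : ℂ) ^ b = prodSubCpow R b x := by
  induction R using Multiset.induction_on with
  | empty => simp [prodSubCpow]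
  | cons r R ih =>
    have hR : ∀ y ∈ R, y ≤ x := fun y hy => hx y (Multiset.mem_cons_of_mem hy)
    simp only [Multiset.map_cons, Multiset.prod_cons, ofReal_mul, prodSubCpow] at ih ⊢
    rw [mul_cpow_ofReal_nonneg (sub_nonneg.2 (hx r (Multiset.mem_cons_self r R)))
      (prod_map_sub_nonneg hR), ih hR, ofReal_sub]

lemma differentiableAt_prodSubCpow_exp {R : Multiset ℝ} (hR : ∀ r ∈ R, r ≤ 0) (b : ℂ)
    {w : ℂ} (hw : |w.im| < π) : DifferentiableAt ℂ (fun w => prodSubCpow R b (exp w)) w := by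
  classical
  exact (HasFDerivAt.multiset_prod fun r hr =>
    ((differentiableAt_exp.sub_const _).cpow (differentiableAt_const b)
      (exp_sub_ofReal_mem_slitPlane hw (hR r hr))).hasFDerivAt).differentiableAt

lemma integral_Ioi_mul_cpow_eq_integral_exp (g : ℂ → ℂ) (s : ℂ) :
    ∫ x in Ioi (0 : ℝ), g x * (x : ℂ) ^ (s - 1) = ∫ u : ℝ, g (exp u) * exp (s * u) := by
  rw [← Real.range_exp, ← image_univ, integral_image_eq_integral_abs_deriv_smul
      MeasurableSet.univ (fun u _ => (Real.hasDerivAt_exp u).hasDerivWithinAt)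
      Real.exp_injective.injOn, setIntegral_univ]
  congr 1 with u
  rw [abs_of_pos (Real.exp_pos u), real_smul, ofReal_exp,
    cpow_def_of_ne_zero (exp_ne_zero _), log_exp (by simp [Real.pi_pos]) (by simp [Real.pi_pos.le]),
    mul_left_comm, ← exp_add]
  ring_nf

lemma integrable_exp_neg_mul_abs {m : ℝ} (hm : 0 < m) :
    Integrable fun u : ℝ => Real.exp (-m * |u|) := by
  have hIoi : IntegrableOn (fun u : ℝ => Real.exp (-m * |u|)) (Ioi 0) :=
    (exp_neg_integrableOn_Ioi 0 hm).congr_fun (fun u hu => by rw [abs_of_pos hu]) measurableSet_Ioi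
  have hIic : IntegrableOn (fun u : ℝ => Real.exp (-m * |u|)) (Iic 0) := by
    rw [integrableOn_Iic_iff_integrableOn_Iio]
    simpa [Function.comp_def] using
      ((Measure.measurePreserving_neg volume).integrableOn_comp_preimage
        (Homeomorph.neg ℝ).measurableEmbedding).2 hIoi
  rw [← integrableOn_univ, ← Iic_union_Ioi (a := (0 : ℝ))]
  exact hIic.union hIoi

lemma exp_mul_mul_max_one_exp_rpow_le {σ₁ σ₂ σ D : ℝ} (hσ : σ ∈ Icc σ₁ σ₂) (u : ℝ) :
    Real.exp (σ * u) * max 1 (Real.exp u) ^ (-D) ≤ Real.exp (-min σ₁ (D - σ₂) * |u|) := by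
  rw [← Real.exp_zero, ← Real.exp_monotone.map_max, ← Real.exp_mul, ← Real.exp_add, Real.exp_le_exp]
  have h1 := min_le_left σ₁ (D - σ₂)
  have h2 := min_le_right σ₁ (D - σ₂)
  rcases le_total u 0 with hu | hu
  · rw [max_eq_left hu, abs_of_nonpos hu]; nlinarith [hσ.1]
  · rw [max_eq_right hu, abs_of_nonneg hu]; nlinarith [hσ.2]

lemma exists_norm_prodSubCpow_exp_le {R : Multiset ℝ} (hR : ∀ r ∈ R, r < 0) {ε : ℝ}
    (hε : 0 < ε) (hεπ : ε ≤ π) {b : ℂ} (hb : b.re ≤ 0) :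
    ∃ K > 0, ∀ u y : ℝ, |y| ≤ π - ε →
      ‖prodSubCpow R b (exp (u + y * I))‖ ≤ K * max 1 (Real.exp u) ^ (Multiset.card R * b.re) := by
  obtain ⟨K, hK, hKz⟩ := exists_norm_prodSubCpow_le hR hε hεπ hb
  refine ⟨K, hK, fun u y hy => ?_⟩
  have harg : arg (exp (u + y * I)) = y := by
    rw [arg_exp, (toIocMod_eq_self _).2 ⟨?_, ?_⟩] <;>
      simp only [add_im, ofReal_im, mul_im, ofReal_re, I_im, mul_one, I_re, mul_zero, add_zero,
        zero_add] <;> linarith [abs_le.1 hy]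
  simpa [norm_exp] using hKz (exp (u + y * I)) (by rwa [harg])

theorem exists_norm_integral_prodSubCpow_mul_cpow_le {R : Multiset ℝ} (hR : ∀ r ∈ R, r < 0)
    {a : ℂ} {ε : ℝ} (hε : 0 < ε) (hεπ : ε ≤ π) {σ₁ σ₂ : ℝ} (hσ₁ : 0 < σ₁) (hσ₁₂ : σ₁ ≤ σ₂)
    (hσ₂ : σ₂ < Multiset.card R * a.re) :
    ∃ C > 0, ∀ σ ∈ Icc σ₁ σ₂, ∀ t : ℝ,
      ‖∫ x in Ioi (0 : ℝ), prodSubCpow R (-a) x * (x : ℂ) ^ ((σ : ℂ) + t * I - 1)‖ ≤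
        C * Real.exp (-(π - ε) * |t|) := by
  have ha : 0 ≤ a.re := by
    by_contra! h
    nlinarith [(Multiset.card R).cast_nonneg (α := ℝ)]
  obtain ⟨K, hK, hK_le⟩ := exists_norm_prodSubCpow_exp_le hR hε hεπ (b := -a) (by simpa using ha)
  set m := min σ₁ (Multiset.card R * a.re - σ₂)
  have hm : 0 < m := lt_min hσ₁ (by linarith)
  set φ : ℝ → ℝ := fun u => K * Real.exp (-m * |u|)
  have hφ : Integrable φ := (integrable_exp_neg_mul_abs hm).const_mul K
  have hφ_lim : Tendsto φ (cocompact ℝ) (𝓝 0) := by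
    simpa [φ] using (Real.tendsto_exp_atBot.comp <|
      (tendsto_norm_cocompact_atTop (E := ℝ)).const_mul_atTop_of_neg
        (neg_neg_of_pos hm)).const_mul K
  refine ⟨∫ u, φ u, by simpa [φ, integral_const_mul] using mul_pos hK (integral_exp_pos
    (integrable_exp_neg_mul_abs hm)), fun σ hσ t => ?_⟩
  rw [integral_Ioi_mul_cpow_eq_integral_exp]
  refine norm_integral_le_of_differentiableAt_strip
    (Ψ := fun w => prodSubCpow R (-a) (exp w) * exp ((σ + t * I) * w)) (by linarith) hφ hφ_lim
    (fun w hw => (differentiableAt_prodSubCpow_exp (fun r hr => (hR r hr).le) (-a)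
      (by linarith)).mul (differentiableAt_id.const_mul _).cexp) (fun u y hy => ?_)
  have hexp : ‖exp ((σ + t * I) * (u + y * I))‖ = Real.exp (-(t * y)) * Real.exp (σ * u) := by
    rw [norm_exp, ← Real.exp_add]
    simp only [mul_re, add_re, ofReal_re, I_re, mul_zero, ofReal_im, I_im, mul_one, sub_zero,
      add_im, mul_im, zero_add, add_zero]
    ring_nf
  rw [norm_mul, hexp]
  calc _ ≤ K * max 1 (Real.exp u) ^ (Multiset.card R * (-a).re) *
        (Real.exp (-(t * y)) * Real.exp (σ * u)) :=
        mul_le_mul_of_nonneg_right (hK_le u y hy) (by positivity)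
    _ = Real.exp (-(t * y)) * (K * (Real.exp (σ * u) *
        max 1 (Real.exp u) ^ (-(Multiset.card R * a.re)))) := by rw [neg_re, mul_neg]; ring
    _ ≤ Real.exp (-(t * y)) * φ u := by
        simp only [φ]; gcongr; exact exp_mul_mul_max_one_exp_rpow_le hσ u

theorem stmt5_general (f : Polynomial ℝ) (d : ℕ) (hd : f.natDegree = d)
    (hf : ∀ x : ℝ, 0 ≤ x → 0 < f.eval x)
    (hsplit : f.Splits) :
    ∀ (a : ℂ) (ε : ℝ), 0 < ε → ε < Real.pi →
      ∀ σ₁ σ₂ : ℝ, 0 < σ₁ → σ₁ ≤ σ₂ → σ₂ < d * a.re →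
        ∃ C : ℝ, 0 < C ∧ ∀ σ ∈ Set.Icc σ₁ σ₂, ∀ t : ℝ, 1 ≤ |t| →
          ‖∫ x in Set.Ioi (0 : ℝ),
              (((f.eval x : ℝ) : ℂ)) ^ (-a) * (x : ℂ) ^ ((σ : ℂ) + (t : ℂ) * Complex.I - 1)‖ ≤
            C * Real.exp (-(Real.pi - ε) * |t|) := by
  intro a ε hε hεπ σ₁ σ₂ hσ₁ hσ₁₂ hσ₂
  have hroots : ∀ r ∈ f.roots, r < 0 := fun r hr => by
    by_contra! h
    exact (hf r h).ne' (isRoot_of_mem_roots hr)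
  have hc : 0 < f.leadingCoeff := by
    have h0 := hf 0 le_rfl
    rw [hsplit.eval_eq_prod_roots] at h0
    exact pos_of_mul_pos_left h0 (prod_map_sub_nonneg fun r hr => (hroots r hr).le)
  obtain ⟨C, hC, hCbound⟩ := exists_norm_integral_prodSubCpow_mul_cpow_le hroots hε hεπ.le hσ₁ hσ₁₂
    (by rwa [splits_iff_card_roots.1 hsplit, hd])
  refine ⟨‖(f.leadingCoeff : ℂ) ^ (-a)‖ * C, by
    rw [norm_cpow_eq_rpow_re_of_pos hc]; positivity, fun σ hσ t _ => ?_⟩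
  have heval : ∀ x ∈ Ioi (0 : ℝ),
      ((f.eval x : ℝ) : ℂ) ^ (-a) * (x : ℂ) ^ ((σ : ℂ) + t * I - 1) =
        (f.leadingCoeff : ℂ) ^ (-a) *
          (prodSubCpow f.roots (-a) x * (x : ℂ) ^ ((σ : ℂ) + t * I - 1)) :=
    fun x hx => by
      have hx_roots : ∀ r ∈ f.roots, r ≤ x := fun r hr => by linarith [hroots r hr, mem_Ioi.1 hx]
      rw [hsplit.eval_eq_prod_roots, ofReal_mul, mul_cpow_ofReal_nonneg hc.le
        (prod_map_sub_nonneg hx_roots), ofReal_prod_sub_cpow hx_roots, mul_assoc]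
  rw [setIntegral_congr_fun measurableSet_Ioi heval, integral_const_mul, norm_mul, mul_assoc]
  gcongr
  exact hCbound σ hσ t

/-- If all roots of `f` are real, then `F_f(a, σ + it)` decays like
`exp(−(π−ε)|t|)` as `|t| → ∞`, uniformly for `σ` in compact subsets of `(0, d·Re(a))`. -/
theorem stmt5 (f : Polynomial ℝ) (d : ℕ) (hd : f.natDegree = d) (hd1 : 1 ≤ d)
    (hf : ∀ x : ℝ, 0 ≤ x → 0 < f.eval x)
    (hsplit : f.Splits) :
    ∀ (a : ℂ) (ε : ℝ), 0 < ε → ε < Real.pi →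
      ∀ σ₁ σ₂ : ℝ, 0 < σ₁ → σ₁ ≤ σ₂ → σ₂ < d * a.re →
        ∃ C : ℝ, 0 < C ∧ ∀ σ ∈ Set.Icc σ₁ σ₂, ∀ t : ℝ, 1 ≤ |t| →
          ‖∫ x in Set.Ioi (0 : ℝ),
              (((f.eval x : ℝ) : ℂ)) ^ (-a) * (x : ℂ) ^ ((σ : ℂ) + (t : ℂ) * Complex.I - 1)‖ ≤
            C * Real.exp (-(Real.pi - ε) * |t|) :=
  stmt5_general f d hd hf hsplit
end

section
/- Let Z_B : ℂ → ℂ be any meromorphic continuation of ω_B. Then (s − 1/2) · Z_B(s) tends to Γ(1/4)² / (8·√(2π)) as s → 1/2 with s ≠ 1/2; that is, ω_B has a simple pole at s = 1/2 with residue Γ(1/4)² / (8·√(2π)). -/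
/-!
Write `J(σ) = ∫₀^∞ (t(t+1)(t+2))^(-σ) dt`. The summand is homogeneous of degree `-4σ` in
`(m, n)`, so by the integral test the inner sum over `m` equals `J(σ) n^(1-4σ) + O(n^(-3/2))`,
uniformly for `σ ∈ (1/2, 3/4]`. Hence `ω_B(σ) = J(σ) ζ(4σ-1) + O(1)`, and the simple pole of `ζ`
at `1` gives `(σ - 1/2) ω_B(σ) → J(1/2)/4` as `σ → 1/2⁺`. The substitution `t = v^(-1/2) - 1`
turns `J(1/2)` into `B(1/4, 1/2)/2 = Γ(1/4)² / (2√(2π))`.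

A meromorphic function that has a limit along one approach to a point has nonnegative order
there, hence a limit in the punctured neighbourhood, which must be the same limit; this upgrades
the limit along the real half-line to the full punctured limit of `(s - 1/2) Z(s)`.
-/

open Complex Filter Topology Set MeasureTheory

theorem MeromorphicAt.tendsto_nhdsNE_of_tendsto {𝕜 E : Type*} [NontriviallyNormedField 𝕜]
    [NormedAddCommGroup E] [NormedSpace 𝕜 E] {f : 𝕜 → E} {x : 𝕜} {c : E}
    (hf : MeromorphicAt f x) {l : Filter 𝕜} [l.NeBot] (hl : l ≤ 𝓝[≠] x)
    (hc : Tendsto f l (𝓝 c)) : Tendsto f (𝓝[≠] x) (𝓝 c) := by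
  rcases lt_or_ge (meromorphicOrderAt f x) 0 with hneg | hnonneg
  · have := (tendsto_cobounded_of_meromorphicOrderAt_neg hneg).mono_left hl
    exact absurd (tendsto_norm_atTop_iff_cobounded.mpr this)
      (not_tendsto_atTop_of_tendsto_nhds hc.norm)
  · obtain ⟨c', hc'⟩ := tendsto_nhds_of_meromorphicOrderAt_nonneg hf hnonneg
    rwa [tendsto_nhds_unique hc (hc'.mono_left hl)]

theorem Complex.tendsto_ofReal_nhdsNE (x : ℝ) :
    Tendsto ((↑) : ℝ → ℂ) (𝓝[≠] x) (𝓝[≠] (x : ℂ)) :=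
  tendsto_nhdsWithin_of_tendsto_nhds_of_eventually_within _
    (continuous_ofReal.tendsto x |>.mono_left nhdsWithin_le_nhds)
    (eventually_nhdsWithin_of_forall fun _ hy => ofReal_injective.ne hy)

theorem Complex.hasSum_re_of_hasSum_ofReal {α : Type*} {f : α → ℝ} {z : ℂ}
    (h : HasSum (fun a => (f a : ℂ)) z) : HasSum f z.re ∧ (z.re : ℂ) = z := by
  have hre : HasSum f z.re := by simpa using reCLM.hasSum h
  exact ⟨hre, (hasSum_ofReal.mpr hre).unique h⟩

theorem AntitoneOn.abs_tsum_sub_integral_Ioi_le {u : ℝ → ℝ} (anti : AntitoneOn u (Ioi 0))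
    (integrable : IntegrableOn u (Ioi 0)) (nonneg : ∀ t ∈ Ioi 0, 0 ≤ u t) :
    |∑' n : ℕ, u (n + 1) - ∫ x in Ioi 0, u x| ≤ ∫ x in Ioc 0 1, u x := by
  have anti₁ : AntitoneOn u (Ici ((1 : ℕ) : ℝ)) :=
    anti.mono fun x hx => lt_of_lt_of_le one_pos (by simpa using hx)
  have nonneg₁ : ∀ t ∈ Ioi ((1 : ℕ) : ℝ), 0 ≤ u t :=
    fun t ht => nonneg t (lt_trans one_pos (by simpa using ht))
  have integrable₁ : IntegrableOn u (Ioi ((1 : ℕ) : ℝ)) :=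
    integrable.mono_set (Ioi_subset_Ioi (by norm_num))
  have summable : Summable fun n : ℕ => u n :=
    anti₁.summable_of_integrableOn_Ioi integrable₁ nonneg₁
  have summable₁ : Summable fun n : ℕ => u (n + 1) := by
    exact_mod_cast (summable_nat_add_iff 1).mpr summable
  have split : ∫ x in Ioi 0, u x = (∫ x in Ioc 0 1, u x) + ∫ x in Ioi 1, u x := by
    rw [← intervalIntegral.integral_interval_add_Ioi integrable (by simpa using integrable₁),
      intervalIntegral.integral_of_le zero_le_one]
  have lower : ∫ x in Ioi 1, u x ≤ ∑' n : ℕ, u (n + 1) := by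
    simpa using anti₁.integral_le_tsum_comp_add 1 summable nonneg₁
  have upper : ∑' n : ℕ, u (n + 1) ≤ u 1 + ∫ x in Ioi 1, u x := by
    have tail := anti₁.tsum_comp_add_le_integral 1 integrable₁ nonneg₁
    rw [summable₁.tsum_eq_zero_add]
    push_cast at tail ⊢
    rw [zero_add]
    linarith
  have head : u 1 ≤ ∫ x in Ioc 0 1, u x := by
    simpa using setIntegral_ge_of_const_le_real (μ := volume) measurableSet_Ioc (by simp)
      (fun x hx => anti hx.1 (by norm_num : (1 : ℝ) ∈ Ioi 0) hx.2)
      (integrable.mono_set Ioc_subset_Ioi_self)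
  have head_nonneg : 0 ≤ ∫ x in Ioc 0 1, u x :=
    setIntegral_nonneg measurableSet_Ioc fun x hx => nonneg x hx.1
  rw [abs_le]
  constructor <;> linarith

-- On the right, the `n = 0` term is `1 / 0 ^ s = 0`.
theorem hasSum_one_div_nat_add_one_rpow {s : ℝ} (hs : 1 < s) :
    HasSum (fun n : ℕ => 1 / ((n : ℝ) + 1) ^ s) (∑' n : ℕ, 1 / (n : ℝ) ^ s) := by
  have h := (Real.summable_one_div_nat_rpow.mpr hs).hasSum
  rw [← hasSum_nat_add_iff' 1] at h
  simpa [Real.zero_rpow (by linarith : s ≠ 0)] using h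

theorem tendsto_sub_mul_tsum_one_div_nat_rpow_four_mul_sub_one :
    Tendsto (fun σ : ℝ => (σ - 1 / 2) * ∑' n : ℕ, 1 / (n : ℝ) ^ (4 * σ - 1)) (𝓝[>] (1 / 2))
      (𝓝 (1 / 4)) := by
  have hlin : Tendsto (fun σ : ℝ => 4 * σ - 1) (𝓝[>] (1 / 2)) (𝓝[>] 1) := by
    refine tendsto_nhdsWithin_of_tendsto_nhds_of_eventually_within _ ?_ ?_
    · exact ((by fun_prop : Continuous fun σ : ℝ => 4 * σ - 1).tendsto' _ _ (by norm_num))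
        |>.mono_left nhdsWithin_le_nhds
    · filter_upwards [self_mem_nhdsWithin] with σ (hσ : 1 / 2 < σ)
      show 1 < 4 * σ - 1
      linarith
  convert (tendsto_sub_mul_tsum_nat_rpow.comp hlin).const_mul (1 / 4) using 1
  · ext σ
    simp only [Function.comp]
    ring
  · norm_num

theorem integral_Ioo_rpow_mul_one_sub_rpow {a b : ℝ} (ha : 0 < a) (hb : 0 < b) :
    ∫ v in Ioo 0 1, v ^ (a - 1) * (1 - v) ^ (b - 1) =
      Real.Gamma a * Real.Gamma b / Real.Gamma (a + b) := by
  have hbeta : ((∫ v in Ioo 0 1, v ^ (a - 1) * (1 - v) ^ (b - 1) : ℝ) : ℂ) =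
      betaIntegral a b := by
    rw [betaIntegral, ← integral_Ioc_eq_integral_Ioo, ← intervalIntegral.integral_of_le
      zero_le_one, ← intervalIntegral.integral_ofReal]
    refine intervalIntegral.integral_congr fun v hv => ?_
    rw [uIcc_of_le zero_le_one] at hv
    push_cast
    rw [ofReal_cpow hv.1, ofReal_cpow (sub_nonneg.mpr hv.2)]
    push_cast
    rfl
  have h := Gamma_mul_Gamma_eq_betaIntegral (s := a) (t := b) (by simpa) (by simpa)
  rw [← hbeta, ← ofReal_add, Gamma_ofReal, Gamma_ofReal, Gamma_ofReal] at h
  rw [eq_div_iff (Real.Gamma_pos_of_pos (add_pos ha hb)).ne', mul_comm]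
  exact_mod_cast h.symm

open Real in
theorem Real.Gamma_one_fourth_mul_Gamma_one_half_div_Gamma_three_fourths :
    Gamma (1 / 4) * Gamma (1 / 2) / Gamma (3 / 4) = Gamma (1 / 4) ^ 2 / √(2 * π) := by
  have hreflection : Gamma (1 / 4) * Gamma (3 / 4) = π * √2 := by
    have h := Gamma_mul_Gamma_one_sub (1 / 4)
    rw [show (1 : ℝ) - 1 / 4 = 3 / 4 by norm_num, show π * (1 / 4) = π / 4 by ring,
      sin_pi_div_four] at h
    rw [h]
    field_simp
    rw [sq_sqrt zero_le_two]
  have hG₃ : Gamma (3 / 4) ≠ 0 := (Gamma_pos_of_pos (by norm_num)).ne'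
  have hπ : √π ^ 2 = π := sq_sqrt pi_pos.le
  rw [Gamma_one_half_eq, sqrt_mul zero_le_two, div_eq_div_iff hG₃ (by positivity)]
  linear_combination Gamma (1 / 4) * √2 * hπ - Gamma (1 / 4) * hreflection

namespace OmegaB

noncomputable def term (σ x y : ℝ) : ℝ := (x * y * (x + y) * (x + 2 * y)) ^ (-σ)

noncomputable def rowIntegral (σ : ℝ) : ℝ := ∫ t in Ioi 0, term σ t 1

noncomputable def majorant (t : ℝ) : ℝ := if t ≤ 1 then t ^ (-(3 / 4) : ℝ) else t ^ (-(3 / 2) : ℝ)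

variable {σ x y b t v : ℝ}

lemma term_nonneg (hx : 0 ≤ x) (hy : 0 ≤ y) : 0 ≤ term σ x y := by
  unfold term
  positivity

lemma term_antitoneOn (hσ : 0 ≤ σ) (hy : 0 < y) : AntitoneOn (fun x => term σ x y) (Ioi 0) := by
  intro x (hx : 0 < x) x' (hx' : 0 < x') hxx'
  exact Real.rpow_le_rpow_of_nonpos (by positivity) (by gcongr) (by linarith)

lemma term_le_left (hσ : 0 ≤ σ) (hx : 0 < x) (hy : 0 < y) : term σ x y ≤ (x * y ^ 3) ^ (-σ) :=
  Real.rpow_le_rpow_of_nonpos (by positivity)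
    (by nlinarith [mul_pos (mul_pos hx hy) (mul_pos hx hy),
      mul_pos (mul_pos hx hy) (mul_pos hx hx)])
    (by linarith)

lemma term_le_right (hσ : 0 ≤ σ) (hx : 0 < x) (hy : 0 < y) : term σ x y ≤ (x ^ 3 * y) ^ (-σ) :=
  Real.rpow_le_rpow_of_nonpos (by positivity)
    (by nlinarith [mul_pos (mul_pos hx hy) (mul_pos hy hy),
      mul_pos (mul_pos hx hy) (mul_pos hx hy)])
    (by linarith)

lemma term_mul_mul {c : ℝ} (hc : 0 < c) (hx : 0 ≤ x) (hy : 0 ≤ y) :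
    term σ (c * x) (c * y) = c ^ (-(4 * σ)) * term σ x y := by
  rw [term, term, neg_mul_eq_mul_neg, Real.rpow_mul hc.le, ← Real.mul_rpow (by positivity)
    (by positivity), Real.rpow_ofNat]
  congr 1
  ring

lemma term_eq_rpow_mul_term_one (hx : 0 ≤ x) (hb : 0 < b) :
    term σ x b = b ^ (-(4 * σ)) * term σ (b⁻¹ * x) 1 := by
  rw [← term_mul_mul hb (by positivity) zero_le_one]
  field_simp

lemma term_one_le_majorant (hσ : σ ∈ Icc (1 / 2 : ℝ) (3 / 4)) (ht : 0 < t) :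
    term σ t 1 ≤ majorant t := by
  obtain ⟨hσ₁, hσ₂⟩ := hσ
  unfold majorant
  split_ifs with ht₁
  · calc term σ t 1 ≤ (t * 1 ^ 3) ^ (-σ) := term_le_left (by linarith) ht one_pos
      _ ≤ t ^ (-(3 / 4) : ℝ) := by
        rw [one_pow, mul_one]
        exact Real.rpow_le_rpow_of_exponent_ge ht ht₁ (by linarith)
  · calc term σ t 1 ≤ (t ^ 3 * 1) ^ (-σ) := term_le_right (by linarith) ht one_pos
      _ = t ^ (3 * -σ) := by rw [mul_one, Real.rpow_mul ht.le, Real.rpow_ofNat]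
      _ ≤ t ^ (-(3 / 2) : ℝ) := Real.rpow_le_rpow_of_exponent_le (by linarith) (by linarith)

lemma ae_norm_term_one_le_majorant (hσ : σ ∈ Icc (1 / 2 : ℝ) (3 / 4)) :
    ∀ᵐ t ∂volume.restrict (Ioi 0), ‖term σ t 1‖ ≤ majorant t := by
  refine (ae_restrict_iff' measurableSet_Ioi).mpr (ae_of_all _ fun t (ht : 0 < t) => ?_)
  rw [Real.norm_of_nonneg (term_nonneg ht.le zero_le_one)]
  exact term_one_le_majorant hσ ht

lemma integrableOn_majorant : IntegrableOn majorant (Ioi 0) := by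
  rw [← Ioc_union_Ioi_eq_Ioi zero_le_one]
  refine IntegrableOn.union ?_ ?_
  · have := intervalIntegral.intervalIntegrable_rpow' (a := 0) (b := 1) (r := -(3 / 4))
      (by norm_num)
    rw [intervalIntegrable_iff_integrableOn_Ioc_of_le zero_le_one] at this
    exact this.congr_fun (fun t ht => by simp [majorant, ht.2]) measurableSet_Ioc
  · exact (integrableOn_Ioi_rpow_of_lt (a := -(3 / 2)) (by norm_num) one_pos).congr_fun
      (fun t (ht : 1 < t) => by simp [majorant, not_le.mpr ht]) measurableSet_Ioi

lemma continuousOn_term_one (σ : ℝ) : ContinuousOn (fun t => term σ t 1) (Ioi 0) :=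
  fun t (ht : 0 < t) => (ContinuousAt.rpow_const (by fun_prop)
    (Or.inl (by positivity))).continuousWithinAt

lemma integrableOn_term_one (hσ : σ ∈ Icc (1 / 2 : ℝ) (3 / 4)) :
    IntegrableOn (fun t => term σ t 1) (Ioi 0) :=
  integrableOn_majorant.mono'
    ((continuousOn_term_one σ).aestronglyMeasurable measurableSet_Ioi)
    (ae_norm_term_one_le_majorant hσ)

lemma integrableOn_term (hσ : σ ∈ Icc (1 / 2 : ℝ) (3 / 4)) (hb : 0 < b) :
    IntegrableOn (fun x => term σ x b) (Ioi 0) := by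
  have : IntegrableOn (fun x => b ^ (-(4 * σ)) * term σ (b⁻¹ * x) 1) (Ioi 0) :=
    ((integrableOn_Ioi_comp_mul_left_iff (fun t => term σ t 1) 0 (inv_pos.mpr hb)).mpr
      (by simpa using integrableOn_term_one hσ)).const_mul _
  exact this.congr_fun (fun x (hx : 0 < x) => (term_eq_rpow_mul_term_one hx.le hb).symm)
    measurableSet_Ioi

lemma tendsto_rowIntegral :
    Tendsto rowIntegral (𝓝[>] (1 / 2)) (𝓝 (rowIntegral (1 / 2))) := by
  refine tendsto_integral_filter_of_dominated_convergence majorant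
    (Eventually.of_forall fun σ => (continuousOn_term_one σ).aestronglyMeasurable
      measurableSet_Ioi) ?_ integrableOn_majorant ?_
  · filter_upwards [Ioc_mem_nhdsGT (show (1 / 2 : ℝ) < 3 / 4 by norm_num)] with σ hσ
    exact ae_norm_term_one_le_majorant ⟨hσ.1.le, hσ.2⟩
  · refine (ae_restrict_iff' measurableSet_Ioi).mpr (ae_of_all _ fun t (ht : 0 < t) => ?_)
    have hbase : 0 < t * 1 * (t + 1) * (t + 2 * 1) := by positivity
    exact ((Real.continuous_const_rpow hbase.ne').comp continuous_neg).continuousWithinAt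

lemma integral_term (hb : 0 < b) :
    ∫ x in Ioi 0, term σ x b = rowIntegral σ / b ^ (4 * σ - 1) := by
  rw [setIntegral_congr_fun measurableSet_Ioi
      (fun x (hx : 0 < x) => term_eq_rpow_mul_term_one hx.le hb), integral_const_mul,
    integral_comp_mul_left_Ioi (fun t => term σ t 1) 0 (inv_pos.mpr hb), mul_zero, inv_inv,
    smul_eq_mul, rowIntegral, ← mul_assoc, ← Real.rpow_add_one hb.ne', div_eq_mul_inv,
    ← Real.rpow_neg hb.le]
  ring_nf

lemma integral_Ioc_term_le (hσ : σ ∈ Icc (1 / 2 : ℝ) (3 / 4)) (hb : 1 ≤ b) :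
    ∫ x in Ioc 0 1, term σ x b ≤ 4 / b ^ (3 / 2 : ℝ) := by
  obtain ⟨hσ₁, hσ₂⟩ := hσ
  have hb₀ : 0 < b := by linarith
  have hpow : IntegrableOn (fun x : ℝ => x ^ (-σ)) (Ioc 0 1) := by
    rw [← intervalIntegrable_iff_integrableOn_Ioc_of_le zero_le_one]
    exact intervalIntegral.intervalIntegrable_rpow' (by linarith)
  have hb_pow : (b ^ 3) ^ (-σ) ≤ 1 / b ^ (3 / 2 : ℝ) := by
    rw [← Real.rpow_natCast, ← Real.rpow_mul hb₀.le, one_div, ← Real.rpow_neg hb₀.le]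
    exact Real.rpow_le_rpow_of_exponent_le hb (by push_cast; linarith)
  have hint : ∫ x in Ioc 0 1, x ^ (-σ) = 1 / (1 - σ) := by
    rw [← intervalIntegral.integral_of_le zero_le_one, integral_rpow (Or.inl (by linarith)),
      Real.one_rpow, Real.zero_rpow (by linarith)]
    ring_nf
  calc ∫ x in Ioc 0 1, term σ x b ≤ ∫ x in Ioc 0 1, x ^ (-σ) * (b ^ 3) ^ (-σ) := by
        refine setIntegral_mono_on ((integrableOn_term ⟨hσ₁, hσ₂⟩ hb₀).mono_set
          Ioc_subset_Ioi_self) (hpow.mul_const _) measurableSet_Ioc fun x hx => ?_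
        rw [← Real.mul_rpow hx.1.le (by positivity)]
        exact term_le_left (by linarith) hx.1 hb₀
    _ = 1 / (1 - σ) * (b ^ 3) ^ (-σ) := by rw [integral_mul_const, hint]
    _ ≤ 4 * (1 / b ^ (3 / 2 : ℝ)) := by
        gcongr
        rw [div_le_iff₀ (by linarith)]
        linarith
    _ = 4 / b ^ (3 / 2 : ℝ) := by ring

lemma abs_tsum_term_sub_le (hσ : σ ∈ Icc (1 / 2 : ℝ) (3 / 4)) (hb : 1 ≤ b) :
    |∑' m : ℕ, term σ (m + 1) b - rowIntegral σ / b ^ (4 * σ - 1)| ≤ 4 / b ^ (3 / 2 : ℝ) := by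
  have hb₀ : 0 < b := by linarith
  rw [← integral_term hb₀]
  exact ((term_antitoneOn (by linarith [hσ.1]) hb₀).abs_tsum_sub_integral_Ioi_le
    (integrableOn_term hσ hb₀) fun x hx => term_nonneg (le_of_lt hx) hb₀.le).trans
    (integral_Ioc_term_le hσ hb)

lemma abs_sub_rowIntegral_mul_tsum_le (hσ : σ ∈ Ioc (1 / 2 : ℝ) (3 / 4)) {S : ℝ}
    (hS : HasSum (fun p : ℕ × ℕ => term σ (p.1 + 1) (p.2 + 1)) S) :
    |S - rowIntegral σ * ∑' n : ℕ, 1 / (n : ℝ) ^ (4 * σ - 1)| ≤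
      4 * ∑' n : ℕ, 1 / (n : ℝ) ^ (3 / 2 : ℝ) := by
  have hswap : HasSum (fun p : ℕ × ℕ => term σ (p.2 + 1) (p.1 + 1)) S :=
    (Equiv.prodComm ℕ ℕ).hasSum_iff.mpr hS
  have hrows : HasSum (fun n : ℕ => ∑' m : ℕ, term σ (m + 1) (n + 1)) S :=
    hswap.prod_fiberwise fun n => (hswap.summable.prod_factor n).hasSum
  have hmain := (hasSum_one_div_nat_add_one_rpow (s := 4 * σ - 1)
    (by linarith [hσ.1])).mul_left (rowIntegral σ)
  have herr := (hasSum_one_div_nat_add_one_rpow (s := 3 / 2) (by norm_num)).mul_left 4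
  refine (hrows.sub hmain).norm_le_of_bounded herr fun n => ?_
  rw [Real.norm_eq_abs, mul_one_div, mul_one_div]
  exact abs_tsum_term_sub_le ⟨hσ.1.le, hσ.2⟩ (by simp)

theorem tendsto_sub_mul_of_hasSum {S : ℝ → ℝ}
    (hS : ∀ σ, 1 / 2 < σ → HasSum (fun p : ℕ × ℕ => term σ (p.1 + 1) (p.2 + 1)) (S σ)) :
    Tendsto (fun σ => (σ - 1 / 2) * S σ) (𝓝[>] (1 / 2)) (𝓝 (rowIntegral (1 / 2) / 4)) := by
  set P : ℝ → ℝ := fun σ => ∑' n : ℕ, 1 / (n : ℝ) ^ (4 * σ - 1)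
  have hmain : Tendsto (fun σ => rowIntegral σ * ((σ - 1 / 2) * P σ)) (𝓝[>] (1 / 2))
      (𝓝 (rowIntegral (1 / 2) * (1 / 4))) :=
    tendsto_rowIntegral.mul tendsto_sub_mul_tsum_one_div_nat_rpow_four_mul_sub_one
  have herr : Tendsto (fun σ => (σ - 1 / 2) * (S σ - rowIntegral σ * P σ)) (𝓝[>] (1 / 2))
      (𝓝 0) := by
    refine Tendsto.zero_mul_isBoundedUnder_le ?_ (isBoundedUnder_of_eventually_le
      (a := 4 * ∑' n : ℕ, 1 / (n : ℝ) ^ (3 / 2 : ℝ)) ?_)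
    · exact tendsto_sub_nhds_zero_iff.mpr (tendsto_id.mono_left nhdsWithin_le_nhds)
    · filter_upwards [Ioc_mem_nhdsGT (show (1 / 2 : ℝ) < 3 / 4 by norm_num)] with σ hσ
      exact abs_sub_rowIntegral_mul_tsum_le hσ (hS σ hσ.1)
  convert hmain.add herr using 1
  · ext σ
    ring
  · rw [add_zero, mul_one_div]

lemma term_half_rpow_neg_half_sub_one (hv : v ∈ Ioo 0 1) :
    term (1 / 2) (v ^ (-(1 / 2) : ℝ) - 1) 1 = v ^ (3 / 4 : ℝ) * (1 - v) ^ (-(1 / 2) : ℝ) := by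
  obtain ⟨hv₀, hv₁⟩ := hv
  set w := v ^ (-(1 / 2) : ℝ) with hw
  have hw₀ : 0 < w := Real.rpow_pos_of_pos hv₀ _
  have hw_sq : w * w = v⁻¹ := by
    rw [hw, ← Real.rpow_add hv₀, ← Real.rpow_neg_one]
    norm_num
  have hbase : (w - 1) * 1 * (w - 1 + 1) * (w - 1 + 2 * 1) = w * (1 - v) * v⁻¹ := by
    linear_combination w * hw_sq + w * mul_inv_cancel₀ hv₀.ne'
  rw [term, hbase, Real.mul_rpow (by nlinarith) (by positivity), Real.mul_rpow hw₀.le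
    (by linarith), hw, ← Real.rpow_mul hv₀.le, Real.inv_rpow hv₀.le, ← Real.rpow_neg hv₀.le,
    mul_right_comm, ← Real.rpow_add hv₀]
  norm_num

lemma rowIntegral_half_eq_integral :
    rowIntegral (1 / 2) =
      1 / 2 * ∫ v in Ioo 0 1, v ^ (-(3 / 4) : ℝ) * (1 - v) ^ (-(1 / 2) : ℝ) := by
  set φ : ℝ → ℝ := fun v => v ^ (-(1 / 2) : ℝ) - 1
  have himage : φ '' Ioo 0 1 = Ioi 0 := by
    ext t
    simp only [φ, mem_image, mem_Ioi, mem_Ioo]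
    constructor
    · rintro ⟨v, ⟨hv₀, hv₁⟩, rfl⟩
      linarith [Real.one_lt_rpow_of_pos_of_lt_one_of_neg hv₀ hv₁ (by norm_num : -(1 / 2 : ℝ) < 0)]
    · intro ht
      refine ⟨(t + 1) ^ (-2 : ℝ), ⟨by positivity,
        Real.rpow_lt_one_of_one_lt_of_neg (by linarith) (by norm_num)⟩, ?_⟩
      rw [← Real.rpow_mul (by linarith)]
      norm_num
  have hderiv : ∀ v ∈ Ioo (0 : ℝ) 1,
      HasDerivWithinAt φ (-(1 / 2) * v ^ (-(3 / 2) : ℝ)) (Ioo 0 1) v := fun v hv => by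
    have h := (Real.hasDerivAt_rpow_const (p := -(1 / 2)) (Or.inl hv.1.ne')).sub_const 1
    rw [show (-(1 / 2) : ℝ) - 1 = -(3 / 2) by norm_num] at h
    exact h.hasDerivWithinAt
  have hinj : InjOn φ (Ioo 0 1) := fun a ha b hb hab =>
    (Real.strictAntiOn_rpow_Ioi_of_exponent_neg (by norm_num)).injOn ha.1 hb.1
      (sub_left_inj.mp hab)
  rw [rowIntegral, ← himage, integral_image_eq_integral_abs_deriv_smul measurableSet_Ioo hderiv
    hinj, ← integral_const_mul]
  refine setIntegral_congr_fun measurableSet_Ioo fun v hv => ?_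
  have hexp : v ^ (-(3 / 2) : ℝ) * v ^ (3 / 4 : ℝ) = v ^ (-(3 / 4) : ℝ) := by
    rw [← Real.rpow_add hv.1]
    norm_num
  rw [smul_eq_mul, term_half_rpow_neg_half_sub_one hv,
    abs_of_neg (by linarith [Real.rpow_pos_of_pos hv.1 (-(3 / 2))])]
  linear_combination 1 / 2 * (1 - v) ^ (-(1 / 2) : ℝ) * hexp

lemma rowIntegral_half_div_four :
    rowIntegral (1 / 2) / 4 = Real.Gamma (1 / 4) ^ 2 / (8 * Real.sqrt (2 * Real.pi)) := by
  rw [rowIntegral_half_eq_integral, show (-(3 / 4) : ℝ) = 1 / 4 - 1 by norm_num,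
    show (-(1 / 2) : ℝ) = 1 / 2 - 1 by norm_num,
    integral_Ioo_rpow_mul_one_sub_rpow (by norm_num) (by norm_num),
    show (1 / 4 : ℝ) + 1 / 2 = 3 / 4 by norm_num,
    Real.Gamma_one_fourth_mul_Gamma_one_half_div_Gamma_three_fourths]
  ring

lemma ofReal_term (hx : 0 ≤ x) (hy : 0 ≤ y) :
    ((term σ x y : ℝ) : ℂ) =
      1 / ((x : ℂ) ^ (σ : ℂ) * (y : ℂ) ^ (σ : ℂ) * ((x : ℂ) + y) ^ (σ : ℂ) *
        ((x : ℂ) + 2 * y) ^ (σ : ℂ)) := by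
  rw [term, Real.rpow_neg (by positivity), Real.mul_rpow (by positivity) (by positivity),
    Real.mul_rpow (by positivity) (by positivity), Real.mul_rpow hx hy]
  push_cast
  rw [ofReal_cpow hx, ofReal_cpow hy, ofReal_cpow (by positivity), ofReal_cpow (by positivity),
    one_div]
  push_cast
  rfl

end OmegaB

/-- Any meromorphic continuation of `ω_B` has a simple pole at `s = 1/2`
with residue `Γ(1/4)² / (8 √(2π))`. -/
theorem stmt8 (Z : ℂ → ℂ) (hZ : ∀ s : ℂ, MeromorphicAt Z s)
    (hZeq : ∀ s : ℂ, (1 : ℝ) / 2 < s.re →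
      HasSum (fun p : ℕ × ℕ =>
        1 / (((p.1 : ℂ) + 1) ^ s * ((p.2 : ℂ) + 1) ^ s *
          (((p.1 : ℂ) + 1) + ((p.2 : ℂ) + 1)) ^ s *
          (((p.1 : ℂ) + 1) + 2 * ((p.2 : ℂ) + 1)) ^ s)) (Z s)) :
    Tendsto (fun s : ℂ => (s - 1 / 2) * Z s) (𝓝[≠] (1 / 2 : ℂ))
      (𝓝 ((Real.Gamma (1 / 4) ^ 2 / (8 * Real.sqrt (2 * Real.pi)) : ℝ) : ℂ)) := by
  have hS : ∀ σ : ℝ, 1 / 2 < σ →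
      HasSum (fun p : ℕ × ℕ => OmegaB.term σ (p.1 + 1) (p.2 + 1)) (Z σ).re ∧
        ((Z σ).re : ℂ) = Z σ := fun σ hσ => by
    refine Complex.hasSum_re_of_hasSum_ofReal ?_
    convert hZeq σ (by simpa using hσ) using 2 with p
    rw [OmegaB.ofReal_term (by positivity) (by positivity)]
    push_cast
    rfl
  have hreal := OmegaB.tendsto_sub_mul_of_hasSum fun σ hσ => (hS σ hσ).1
  rw [OmegaB.rowIntegral_half_div_four] at hreal
  have hmer : MeromorphicAt (fun s : ℂ => (s - 1 / 2) * Z s) (1 / 2) :=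
    ((MeromorphicAt.id _).sub (MeromorphicAt.const _ _)).mul (hZ _)
  have hline : Tendsto ((↑) : ℝ → ℂ) (𝓝[>] (1 / 2)) (𝓝[≠] (1 / 2 : ℂ)) := by
    simpa using (tendsto_ofReal_nhdsNE (1 / 2)).mono_left (nhdsGT_le_nhdsNE _)
  refine hmer.tendsto_nhdsNE_of_tendsto hline ?_
  rw [tendsto_map'_iff]
  refine ((continuous_ofReal.tendsto _).comp hreal).congr' ?_
  filter_upwards [self_mem_nhdsWithin] with σ hσ
  simp [(hS σ hσ).2]
end

section
/- For every complex number u with −1/2 < Re(u) < 1/6, one has ∫_0^∞ (x(1+x)(1+2x))^{2u} · ((1+3x)(2+3x))^{−2u−2/3} dx = 3^{−3u−3/2} · Γ(1/6 − u) · Γ(u + 1/2) / (2^{2/3} · Γ(2/3)). In particular (taking u = −1/6), ∫_0^∞ (x(1+x)(1+2x)(1+3x)(2+3x))^{−1/3} dx = Γ(1/3)³ / (2^{5/3} · √3 · π). -/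
/-!
With `p = x(1+x)(1+2x)`, `q = (1+3x)(2+3x)` and `r = 1+3x+3x²` one has the polynomial identity
`4r³ = q² + 27p²`, so `s = 27p²/(4r³)` increases from `0` to `1` on `(0, ∞)`, with `1 - s = q²/(4r³)`
and `ds/dx = 27pq/(4r⁴)`. Taking logarithms, `p^(2u) q^(-2u-2/3) dx` is a constant multiple of
`s^(u-1/2) (1-s)^(-u-5/6) ds`, so the integral is a Beta integral `B(u+1/2, 1/6-u)`.
At `u = -1/6` the reflection formula `Γ(1/3) Γ(2/3) = 2π/√3` gives the closed form.
-/

open Complex MeasureTheory Set Filter Topology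

theorem integral_abs_deriv_smul_betaIntegral_comp {s : Set ℝ} {f f' : ℝ → ℝ}
    (hs : MeasurableSet s) (hf' : ∀ x ∈ s, HasDerivWithinAt f (f' x) s x) (hf : InjOn f s)
    (hfs : f '' s = Ioo 0 1) (a b : ℂ) :
    ∫ x in s, |f' x| • ((f x : ℂ) ^ (a - 1) * (1 - (f x : ℂ)) ^ (b - 1)) = betaIntegral a b := by
  rw [← integral_image_eq_integral_abs_deriv_smul hs hf' hf
      (fun t : ℝ => (t : ℂ) ^ (a - 1) * (1 - (t : ℂ)) ^ (b - 1)), hfs, betaIntegral,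
    intervalIntegral.integral_of_le zero_le_one, integral_Ioc_eq_integral_Ioo]

theorem ofReal_cpow_eq_exp {a : ℝ} (ha : 0 < a) (w : ℂ) :
    (a : ℂ) ^ w = exp (w * Real.log a) := by
  rw [cpow_def_of_ne_zero (by exact_mod_cast ha.ne'), ← ofReal_log ha.le, mul_comm]

theorem cpow_mul_cpow_eq_betaIntegrand {p q r : ℝ} (hp : 0 < p) (hq : 0 < q) (hr : 0 < r) (u : ℂ) :
    (p : ℂ) ^ (2 * u) * (q : ℂ) ^ (-2 * u - 2 / 3) =
      (3 : ℂ) ^ (-3 * u - 3 / 2) / (2 : ℂ) ^ ((2 : ℂ) / 3) *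
        ((27 * p * q / (4 * r ^ 4) : ℝ) • (((27 * p ^ 2 / (4 * r ^ 3) : ℝ) : ℂ) ^ (u + 1 / 2 - 1) *
          (((q ^ 2 / (4 * r ^ 3) : ℝ) : ℂ)) ^ (1 / 6 - u - 1))) := by
  have h27 : (27 : ℝ) = 3 ^ 3 := by norm_num
  have h4 : (4 : ℝ) = 2 ^ 2 := by norm_num
  rw [real_smul, show (3 : ℂ) = ((3 : ℝ) : ℂ) by norm_num, show (2 : ℂ) = ((2 : ℝ) : ℂ) by norm_num,
    ← Real.exp_log (by positivity : 0 < 27 * p * q / (4 * r ^ 4)), ofReal_exp,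
    ofReal_cpow_eq_exp hp, ofReal_cpow_eq_exp hq, ofReal_cpow_eq_exp (by norm_num : (0 : ℝ) < 3),
    ofReal_cpow_eq_exp (by norm_num : (0 : ℝ) < 2), ofReal_cpow_eq_exp (by positivity),
    ofReal_cpow_eq_exp (by positivity), ← exp_add, ← exp_sub, ← exp_add, ← exp_add, ← exp_add]
  congr 1
  rw [h27, h4]
  simp (disch := positivity) only [Real.log_div, Real.log_mul, Real.log_pow]
  push_cast
  ring

noncomputable def betaSubst (x : ℝ) : ℝ :=
  27 * (x * (1 + x) * (1 + 2 * x)) ^ 2 / (4 * (1 + 3 * x + 3 * x ^ 2) ^ 3)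

theorem one_add_three_mul_add_three_mul_sq_pos (x : ℝ) : 0 < 1 + 3 * x + 3 * x ^ 2 := by
  nlinarith [sq_nonneg (2 * x + 1)]

theorem one_sub_betaSubst (x : ℝ) :
    1 - betaSubst x = ((1 + 3 * x) * (2 + 3 * x)) ^ 2 / (4 * (1 + 3 * x + 3 * x ^ 2) ^ 3) := by
  have := one_add_three_mul_add_three_mul_sq_pos x
  rw [betaSubst, eq_div_iff (by positivity), sub_mul, div_mul_cancel₀ _ (by positivity)]
  ring

theorem hasDerivAt_betaSubst (x : ℝ) :
    HasDerivAt betaSubst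
      (27 * (x * (1 + x) * (1 + 2 * x)) * ((1 + 3 * x) * (2 + 3 * x)) /
        (4 * (1 + 3 * x + 3 * x ^ 2) ^ 4)) x := by
  have hr := one_add_three_mul_add_three_mul_sq_pos x
  have hp : HasDerivAt (fun x : ℝ => x * (1 + x) * (1 + 2 * x)) (1 + 6 * x + 6 * x ^ 2) x :=
    (((hasDerivAt_id' x).mul ((hasDerivAt_id' x).const_add 1)).mul
      (((hasDerivAt_id' x).const_mul 2).const_add 1)).congr_deriv (by simp only [Pi.mul_apply]; ring)
  have hr' : HasDerivAt (fun x : ℝ => 1 + 3 * x + 3 * x ^ 2) (3 + 6 * x) x :=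
    ((((hasDerivAt_id' x).const_mul 3).const_add 1).add ((hasDerivAt_pow 2 x).const_mul 3)).congr_deriv
      (by norm_num; ring)
  refine (((hp.pow 2).const_mul 27).div ((hr'.pow 3).const_mul 4)
    (by simp only [Pi.pow_apply]; positivity)).congr_deriv ?_
  norm_num only [Pi.pow_apply]
  field_simp
  ring

theorem continuous_betaSubst : Continuous betaSubst :=
  Continuous.div (by fun_prop) (by fun_prop) fun x => by
    have := one_add_three_mul_add_three_mul_sq_pos x; positivity

theorem strictMonoOn_betaSubst : StrictMonoOn betaSubst (Ici 0) := by
  refine strictMonoOn_of_deriv_pos (convex_Ici 0) continuous_betaSubst.continuousOn fun x hx => ?_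
  rw [interior_Ici, mem_Ioi] at hx
  have := one_add_three_mul_add_three_mul_sq_pos x
  rw [(hasDerivAt_betaSubst x).deriv]
  positivity

theorem tendsto_betaSubst_atTop : Tendsto betaSubst atTop (𝓝 1) := by
  suffices Tendsto (fun x => 1 - betaSubst x) atTop (𝓝 0) by
    simpa using this.const_sub 1
  refine squeeze_zero' (g := fun x : ℝ => x⁻¹) ?_ ?_ tendsto_inv_atTop_zero
  · filter_upwards with x
    rw [one_sub_betaSubst]
    have := one_add_three_mul_add_three_mul_sq_pos x
    positivity
  · -- `q ≤ 3r` and `3x ≤ r` give `q² / (4r³) ≤ 9 / (4r) ≤ 1 / x`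
    filter_upwards [eventually_gt_atTop 0] with x hx
    have hr := one_add_three_mul_add_three_mul_sq_pos x
    rw [one_sub_betaSubst, div_le_iff₀ (by positivity), inv_mul_eq_div, le_div_iff₀ hx]
    have hq : (1 + 3 * x) * (2 + 3 * x) ≤ 3 * (1 + 3 * x + 3 * x ^ 2) := by nlinarith
    have hx3 : 3 * x ≤ 1 + 3 * x + 3 * x ^ 2 := by nlinarith
    have hq2 := pow_le_pow_left₀ (by positivity) hq 2
    nlinarith [mul_le_mul_of_nonneg_left hx3 (sq_nonneg (1 + 3 * x + 3 * x ^ 2))]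

theorem image_betaSubst_Ioi : betaSubst '' Ioi 0 = Ioo 0 1 := by
  refine Subset.antisymm ?_ ?_
  · rintro _ ⟨x, hx, rfl⟩
    have hr := one_add_three_mul_add_three_mul_sq_pos x
    rw [mem_Ioi] at hx
    refine ⟨by rw [betaSubst]; positivity, sub_pos.mp ?_⟩
    rw [one_sub_betaSubst]
    positivity
  · have h0 : Tendsto betaSubst (𝓝[>] 0) (𝓝 0) := by
      simpa [betaSubst] using (continuous_betaSubst.continuousWithinAt (s := Ioi 0) (x := 0)).tendsto
    exact isPreconnected_Ioi.intermediate_value_Ioo (le_principal_iff.mpr self_mem_nhdsWithin)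
      (le_principal_iff.mpr (Ioi_mem_atTop 0)) continuous_betaSubst.continuousOn h0
      tendsto_betaSubst_atTop

theorem integral_cpow_mul_cpow_eq_Gamma (u : ℂ) (hu₁ : -(1 : ℝ) / 2 < u.re) (hu₂ : u.re < 1 / 6) :
    (∫ x in Ioi (0 : ℝ),
        ((x * (1 + x) * (1 + 2 * x) : ℝ) : ℂ) ^ (2 * u) *
          (((1 + 3 * x) * (2 + 3 * x) : ℝ) : ℂ) ^ (-2 * u - 2 / 3)) =
      (3 : ℂ) ^ (-3 * u - 3 / 2) * Gamma (1 / 6 - u) * Gamma (u + 1 / 2) /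
        ((2 : ℂ) ^ ((2 : ℂ) / 3) * Gamma (2 / 3)) := by
  have ha : 0 < (u + 1 / 2).re := by norm_num; linarith
  have hb : 0 < (1 / 6 - u).re := by norm_num; linarith
  set c := (3 : ℂ) ^ (-3 * u - 3 / 2) / (2 : ℂ) ^ ((2 : ℂ) / 3)
  calc _ = ∫ x in Ioi (0 : ℝ), c * (|27 * (x * (1 + x) * (1 + 2 * x)) * ((1 + 3 * x) * (2 + 3 * x)) /
          (4 * (1 + 3 * x + 3 * x ^ 2) ^ 4)| • ((betaSubst x : ℂ) ^ (u + 1 / 2 - 1) *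
            (1 - (betaSubst x : ℂ)) ^ (1 / 6 - u - 1))) := by
        refine setIntegral_congr_fun measurableSet_Ioi fun x (hx : 0 < x) => ?_
        have hr := one_add_three_mul_add_three_mul_sq_pos x
        have h1 : (1 : ℂ) - betaSubst x = ((1 - betaSubst x : ℝ) : ℂ) := by push_cast; ring
        rw [abs_of_pos (by positivity), h1, one_sub_betaSubst]
        exact cpow_mul_cpow_eq_betaIntegrand (by positivity) (by positivity) hr u
    _ = c * betaIntegral (u + 1 / 2) (1 / 6 - u) := by
        rw [integral_const_mul, integral_abs_deriv_smul_betaIntegral_comp measurableSet_Ioi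
          (fun x _ => (hasDerivAt_betaSubst x).hasDerivWithinAt)
          (strictMonoOn_betaSubst.mono Ioi_subset_Ici_self).injOn image_betaSubst_Ioi]
    _ = _ := by
        rw [betaIntegral_eq_Gamma_mul_div _ _ ha hb, show u + 1 / 2 + (1 / 6 - u) = 2 / 3 by ring]
        ring

theorem Real.Gamma_one_third_mul_Gamma_two_thirds :
    Real.Gamma (1 / 3) * Real.Gamma (2 / 3) = 2 * Real.pi / Real.sqrt 3 := by
  have h := Real.Gamma_mul_Gamma_one_sub (1 / 3)
  rw [show (1 : ℝ) - 1 / 3 = 2 / 3 by norm_num, show Real.pi * (1 / 3) = Real.pi / 3 by ring,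
    Real.sin_pi_div_three] at h
  rw [h]
  field_simp

theorem cpow_mul_Gamma_div_eq_at_neg_one_sixth :
    (3 : ℂ) ^ (-3 * (-1 / 6 : ℂ) - 3 / 2) * Gamma (1 / 6 - (-1 / 6 : ℂ)) *
        Gamma ((-1 / 6 : ℂ) + 1 / 2) / ((2 : ℂ) ^ ((2 : ℂ) / 3) * Gamma (2 / 3)) =
      ((Real.Gamma (1 / 3) ^ 3 / ((2 : ℝ) ^ ((5 : ℝ) / 3) * Real.sqrt 3 * Real.pi) : ℝ) : ℂ) := by
  have hreal : (3 : ℝ)⁻¹ * Real.Gamma (1 / 3) * Real.Gamma (1 / 3) /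
      (2 ^ ((2 : ℝ) / 3) * Real.Gamma (2 / 3)) =
        Real.Gamma (1 / 3) ^ 3 / (2 ^ ((2 : ℝ) / 3) * 2 * Real.sqrt 3 * Real.pi) := by
    have hΓ : Real.Gamma (1 / 3) * Real.Gamma (2 / 3) * Real.sqrt 3 = 2 * Real.pi := by
      rw [Real.Gamma_one_third_mul_Gamma_two_thirds]; field_simp
    have h3 : Real.sqrt 3 ^ 2 = 3 := Real.sq_sqrt (by norm_num)
    have hΓpos : 0 < Real.Gamma (2 / 3) := Real.Gamma_pos_of_pos (by norm_num)
    rw [div_eq_div_iff (by positivity) (by positivity)]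
    linear_combination (-(1 / 3) * Real.Gamma (1 / 3) ^ 2 * 2 ^ ((2 : ℝ) / 3) * Real.sqrt 3) * hΓ +
      (1 / 3 * Real.Gamma (1 / 3) ^ 3 * 2 ^ ((2 : ℝ) / 3) * Real.Gamma (2 / 3)) * h3
  have h2 : (2 : ℝ) ^ ((5 : ℝ) / 3) = 2 ^ ((2 : ℝ) / 3) * 2 := by
    rw [← Real.rpow_add_one two_ne_zero]; norm_num
  have hcast : (2 : ℂ) ^ ((2 : ℂ) / 3) = ((2 ^ ((2 : ℝ) / 3) : ℝ) : ℂ) := by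
    rw [ofReal_cpow (by norm_num)]; norm_num
  rw [hcast, show -3 * (-1 / 6 : ℂ) - 3 / 2 = -1 by norm_num, cpow_neg_one,
    show (1 / 6 : ℂ) - (-1 / 6) = ((1 / 3 : ℝ) : ℂ) by push_cast; ring,
    show (-1 / 6 : ℂ) + 1 / 2 = ((1 / 3 : ℝ) : ℂ) by push_cast; ring,
    show (2 / 3 : ℂ) = ((2 / 3 : ℝ) : ℂ) by push_cast; ring, Gamma_ofReal, Gamma_ofReal, h2, ← hreal]
  push_cast
  ring

theorem ofReal_rpow_neg_one_third_eq {x : ℝ} (hx : 0 < x) :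
    (((x * (1 + x) * (1 + 2 * x) * (1 + 3 * x) * (2 + 3 * x)) ^ (-(1 : ℝ) / 3) : ℝ) : ℂ) =
      ((x * (1 + x) * (1 + 2 * x) : ℝ) : ℂ) ^ (2 * (-1 / 6 : ℂ)) *
        (((1 + 3 * x) * (2 + 3 * x) : ℝ) : ℂ) ^ (-2 * (-1 / 6 : ℂ) - 2 / 3) := by
  rw [show x * (1 + x) * (1 + 2 * x) * (1 + 3 * x) * (2 + 3 * x) =
      (x * (1 + x) * (1 + 2 * x)) * ((1 + 3 * x) * (2 + 3 * x)) by ring,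
    ofReal_cpow (by positivity), ofReal_mul, mul_cpow_ofReal_nonneg (by positivity) (by positivity)]
  norm_num

/-- For `−1/2 < Re(u) < 1/6`,
`∫_0^∞ (x(1+x)(1+2x))^(2u) ((1+3x)(2+3x))^(−2u−2/3) dx
  = 3^(−3u−3/2) Γ(1/6−u) Γ(u+1/2) / (2^(2/3) Γ(2/3))`;
in particular `∫_0^∞ (x(1+x)(1+2x)(1+3x)(2+3x))^(−1/3) dx = Γ(1/3)³/(2^(5/3) √3 π)`. -/
theorem stmt10 :
    (∀ u : ℂ, -(1 : ℝ) / 2 < u.re → u.re < 1 / 6 →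
      (∫ x in Set.Ioi (0 : ℝ),
          ((x * (1 + x) * (1 + 2 * x) : ℝ) : ℂ) ^ (2 * u) *
            (((1 + 3 * x) * (2 + 3 * x) : ℝ) : ℂ) ^ (-2 * u - 2 / 3)) =
        (3 : ℂ) ^ (-3 * u - 3 / 2) * Complex.Gamma (1 / 6 - u) * Complex.Gamma (u + 1 / 2) /
          ((2 : ℂ) ^ ((2 : ℂ) / 3) * Complex.Gamma (2 / 3))) ∧
    (∫ x in Set.Ioi (0 : ℝ),
        (x * (1 + x) * (1 + 2 * x) * (1 + 3 * x) * (2 + 3 * x)) ^ (-(1 : ℝ) / 3)) =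
      Real.Gamma (1 / 3) ^ 3 / ((2 : ℝ) ^ ((5 : ℝ) / 3) * Real.sqrt 3 * Real.pi) := by
  refine ⟨integral_cpow_mul_cpow_eq_Gamma, ?_⟩
  apply ofReal_injective
  rw [← integral_complex_ofReal,
    setIntegral_congr_fun measurableSet_Ioi fun x hx => ofReal_rpow_neg_one_third_eq hx,
    integral_cpow_mul_cpow_eq_Gamma _ (by norm_num) (by norm_num),
    cpow_mul_Gamma_div_eq_at_neg_one_sixth]
end
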